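/- The vector space Mag^2(V) of labelled planar binary trees with the grafting product and ungrafting coproduct is a connected binary magmatic bialgebra: the coproduct satisfies Δ(s·t) = s·t ⊗ 1 + s ⊗ t + 1 ⊗ s·t for all labelled binary trees s, t, and the coalgebra is connected with Prim Mag^2(V) = V. -/

import Mathlib

open scoped TensorProduct

noncomputable section

/-- Planar binary trees: a leaf, or the grafting `∨(l, r)` of two trees. -/
inductive BTree : Type
  | leaf : BTree
  | node : BTree → BTree → BTree
deriving DecidableEq

namespace BTree

/-- Number of leaves of a planar binary tree. -/
@[reducible] def leaves : BTree → ℕ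
  | .leaf => 1
  | .node l r => leaves l + leaves r

end BTree

variable (K : Type*) [Field K]

/-- The raw data of a binary magmatic bialgebra: a bilinear product with unit, a
coproduct and a counit. -/
structure BinOps (H : Type*) [AddCommGroup H] [Module K H] where
  /-- the binary product -/
  mul : H →ₗ[K] H →ₗ[K] H
  /-- the unit of the product -/
  one : H
  /-- the counit of the coproduct -/
  counit : H →ₗ[K] K
  /-- the binary coproduct -/
  Delta : H →ₗ[K] H ⊗[K] H

variable {H : Type*} [AddCommGroup H] [Module K H]

/-- The product is unitary. -/
def IsBinAlg (S : BinOps K H) : Prop :=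
  (∀ x, S.mul S.one x = x) ∧ (∀ x, S.mul x S.one = x)

/-- The coproduct is counitary and co-augmented by the unit. -/
def IsBinCoalg (S : BinOps K H) : Prop :=
  S.counit S.one = 1 ∧
  S.Delta S.one = S.one ⊗ₜ[K] S.one ∧
  (TensorProduct.lid K H).toLinearMap ∘ₗ
      TensorProduct.map S.counit LinearMap.id ∘ₗ S.Delta = LinearMap.id ∧
  (TensorProduct.rid K H).toLinearMap ∘ₗ
      TensorProduct.map LinearMap.id S.counit ∘ₗ S.Delta = LinearMap.id

/-- The magmatic compatibility relation
`Δ(x·y) = x·y ⊗ 1 + x ⊗ y + 1 ⊗ x·y` for `x, y` in the augmentation ideal. -/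
def IsBinCompat (S : BinOps K H) : Prop :=
  ∀ x y : H, S.counit x = 0 → S.counit y = 0 →
    S.Delta (S.mul x y) =
      (S.mul x y) ⊗ₜ[K] S.one + x ⊗ₜ[K] y + S.one ⊗ₜ[K] (S.mul x y)

/-- The reduced coproduct `Δ̄(x) = Δ(x) - x ⊗ 1 - 1 ⊗ x`. -/
noncomputable def rDelta2 (S : BinOps K H) : H →ₗ[K] H ⊗[K] H :=
  S.Delta - (TensorProduct.mk K H H).flip S.one - TensorProduct.mk K H H S.one

/-- The primitive part `Prim H = ker Δ̄`. -/
noncomputable def Prim2 (S : BinOps K H) : Submodule K H :=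
  LinearMap.ker (rDelta2 K S)

/-- The coradical filtration: `F_0 = K·1`, `F_r = {x | Δ̄(x) ∈ F_{r-1} ⊗ F_{r-1}}`. -/
noncomputable def Fil2 (S : BinOps K H) : ℕ → Submodule K H
  | 0 => Submodule.span K {S.one}
  | r + 1 => Submodule.comap (rDelta2 K S)
      (LinearMap.range (TensorProduct.map (Fil2 S r).subtype (Fil2 S r).subtype))

/-- Connectedness: `H = ∪_r F_r`. -/
def Connected2 (S : BinOps K H) : Prop := ∀ x : H, ∃ r, x ∈ Fil2 K S r

/-- `J = Id - u∘c`, the projection onto the augmentation ideal. -/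
noncomputable def J2 (S : BinOps K H) : H →ₗ[K] H :=
  LinearMap.id - (LinearMap.toSpanSingleton K H S.one) ∘ₗ S.counit

/-- Convolution of two linear maps: `f ⋆ g = μ ∘ (f ⊗ g) ∘ Δ`. -/
noncomputable def conv (S : BinOps K H) (f g : H →ₗ[K] H) : H →ₗ[K] H :=
  TensorProduct.lift S.mul ∘ₗ TensorProduct.map f g ∘ₗ S.Delta

/-- The left-nested convolution powers of `J`: `starPow n = J^{⋆(n+1)}`
(so `starPow 0 = J`, `starPow 1 = J ⋆ J`, ...). -/
noncomputable def starPow (S : BinOps K H) : ℕ → (H →ₗ[K] H)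
  | 0 => J2 K S
  | n + 1 => conv K S (starPow S n) (J2 K S)

/-- The idempotent `e = J - Σ_{n ≥ 2} J^{⋆n}`; the sum is locally finite by
connectedness. -/
noncomputable def e2 (S : BinOps K H) : H → H :=
  fun x => J2 K S x - ∑ᶠ n : ℕ, starPow K S (n + 1) x

/-- A model of the free binary magmatic bialgebra `Mag^2(V)` on the vector space
`V`: labelled planar binary trees with the grafting product and the ungrafting
coproduct, freely spanning (together with the unit, the empty tree). -/
structure Mag2Model (V M : Type*) [AddCommGroup V] [Module K V]
    [AddCommGroup M] [Module K M] (S : BinOps K M) where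
  /-- the labelled binary tree `(t; v_1 ⋯ v_n)` -/
  ι : (t : BTree) → MultilinearMap K (fun _ : Fin t.leaves => V) M
  /-- the product is the grafting of labelled trees -/
  ι_node : ∀ (l r : BTree) (v : Fin (BTree.node l r).leaves → V),
    S.mul (ι l (fun i => v (Fin.castAdd r.leaves i)))
        (ι r (fun i => v (Fin.natAdd l.leaves i))) = ι (.node l r) v
  /-- `M = K·1 ⊕ (⊕_t V^{⊗ leaves t})` via the labelled trees -/
  free : Function.Bijective
    (LinearMap.coprod (LinearMap.toSpanSingleton K M S.one)
      (DFinsupp.lsum ℕ (fun t : BTree => PiTensorProduct.lift (ι t))))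
  counit_one : S.counit S.one = 1
  counit_ι : ∀ (t : BTree) (v : Fin t.leaves → V), S.counit (ι t v) = 0
  /-- `Δ(∅) = ∅ ⊗ ∅` -/
  delta_one : S.Delta S.one = S.one ⊗ₜ[K] S.one
  /-- `Δ(|) = | ⊗ 1 + 1 ⊗ |` -/
  delta_leaf : ∀ v : Fin BTree.leaf.leaves → V,
    S.Delta (ι .leaf v) = (ι .leaf v) ⊗ₜ[K] S.one + S.one ⊗ₜ[K] (ι .leaf v)
  /-- `Δ(t_1 ∨ t_2) = t_1 ⊗ t_2 + (t_1 ∨ t_2) ⊗ 1 + 1 ⊗ (t_1 ∨ t_2)` -/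
  delta_node : ∀ (l r : BTree) (v : Fin (BTree.node l r).leaves → V),
    S.Delta (ι (.node l r) v) =
      (ι l (fun i => v (Fin.castAdd r.leaves i))) ⊗ₜ[K]
        (ι r (fun i => v (Fin.natAdd l.leaves i))) +
      (ι (.node l r) v) ⊗ₜ[K] S.one + S.one ⊗ₜ[K] (ι (.node l r) v)

/-- The canonical inclusion `V → Mag^2(V)`, `v ↦ (|; v)`. -/
noncomputable def leafLin2 {V M : Type*} [AddCommGroup V] [Module K V]
    [AddCommGroup M] [Module K M] {S : BinOps K M} (mod : Mag2Model K V M S) :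
    V →ₗ[K] M :=
  PiTensorProduct.lift (mod.ι .leaf) ∘ₗ
    (PiTensorProduct.subsingletonEquiv (R := K) (s := fun _ : Fin 1 => V) (0 : Fin 1)).symm.toLinearMap
section Mag2Aux

open PiTensorProduct TensorProduct LinearMap

variable {K : Type*} [Field K] {V M : Type*} [AddCommGroup V] [Module K V]
  [AddCommGroup M] [Module K M] {S : BinOps K M}

lemma BTree.leaves_pos : ∀ t : BTree, 0 < t.leaves
  | .leaf => Nat.one_pos
  | .node l _ => Nat.add_pos_left (BTree.leaves_pos l) _

/-- splitting of a pi tensor indexed by a node tree -/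
noncomputable def splitT (K V : Type*) [Field K] [AddCommGroup V] [Module K V] (l r : BTree) :
    (⨂[K] (_ : Fin (BTree.node l r).leaves), V) ≃ₗ[K]
      (⨂[K] (_ : Fin l.leaves), V) ⊗[K] (⨂[K] (_ : Fin r.leaves), V) :=
  (PiTensorProduct.reindex K (fun _ : Fin (l.leaves + r.leaves) => V)
      finSumFinEquiv.symm).trans (PiTensorProduct.tmulEquiv K V).symm

lemma splitT_tprod (l r : BTree) (v : Fin (BTree.node l r).leaves → V) :
    splitT K V l r (tprod K v) =
      (tprod K fun i => v (Fin.castAdd r.leaves i)) ⊗ₜ[K]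
        (tprod K fun i => v (Fin.natAdd l.leaves i)) := by
  simp only [splitT, LinearEquiv.trans_apply, PiTensorProduct.reindex_tprod,
    Equiv.symm_symm, PiTensorProduct.tmulEquiv_symm_apply,
    finSumFinEquiv_apply_left, finSumFinEquiv_apply_right]

/-- the free presentation map -/
noncomputable def Phi (mod : Mag2Model K V M S) :
    (K × Π₀ t : BTree, ⨂[K] (_ : Fin t.leaves), V) →ₗ[K] M :=
  LinearMap.coprod (LinearMap.toSpanSingleton K M S.one)
    (DFinsupp.lsum ℕ (fun t : BTree => PiTensorProduct.lift (mod.ι t)))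

lemma Phi_surj (mod : Mag2Model K V M S) : Function.Surjective (Phi mod) :=
  mod.free.surjective

noncomputable def eE (mod : Mag2Model K V M S) :
    (K × Π₀ t : BTree, ⨂[K] (_ : Fin t.leaves), V) ≃ₗ[K] M :=
  LinearEquiv.ofBijective (Phi mod) mod.free

lemma eE_symm_Phi (mod : Mag2Model K V M S) (p) : (eE mod).symm (Phi mod p) = p :=
  (eE mod).symm_apply_apply p

lemma Phi_symm (mod : Mag2Model K V M S) (x : M) : Phi mod ((eE mod).symm x) = x :=
  (eE mod).apply_symm_apply x

lemma Phi_one (mod : Mag2Model K V M S) : Phi mod (1, 0) = S.one := by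
  simp [Phi]

lemma Phi_single (mod : Mag2Model K V M S) (t : BTree) (y) :
    Phi mod (0, DFinsupp.single t y) = PiTensorProduct.lift (mod.ι t) y := by
  simp [Phi]

/-- projection to the `K` factor -/
noncomputable def pi0 (mod : Mag2Model K V M S) : M →ₗ[K] K :=
  (LinearMap.fst K K _) ∘ₗ (eE mod).symm.toLinearMap

/-- projection to the component of the tree `t` -/
noncomputable def piT (mod : Mag2Model K V M S) (t : BTree) :
    M →ₗ[K] ⨂[K] (_ : Fin t.leaves), V :=
  (DFinsupp.lapply t) ∘ₗ (LinearMap.snd K K _) ∘ₗ (eE mod).symm.toLinearMap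

lemma pi0_Phi (mod : Mag2Model K V M S) (p) : pi0 mod (Phi mod p) = p.1 := by
  simp [pi0, eE_symm_Phi]

lemma piT_Phi (mod : Mag2Model K V M S) (t : BTree) (p) :
    piT mod t (Phi mod p) = p.2 t := by
  simp [piT, eE_symm_Phi, DFinsupp.lapply_apply]

lemma pi0_one (mod : Mag2Model K V M S) : pi0 mod S.one = 1 := by
  rw [← Phi_one mod, pi0_Phi]

lemma piT_one (mod : Mag2Model K V M S) (t : BTree) : piT mod t S.one = 0 := by
  rw [← Phi_one mod, piT_Phi]; rfl

lemma pi0_iota (mod : Mag2Model K V M S) (t : BTree) (v : Fin t.leaves → V) :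
    pi0 mod (mod.ι t v) = 0 := by
  rw [← PiTensorProduct.lift.tprod (R := K) v, ← Phi_single mod, pi0_Phi]

lemma piT_iota (mod : Mag2Model K V M S) (s t : BTree) (v : Fin t.leaves → V) :
    piT mod s (mod.ι t v) =
      (DFinsupp.single t (tprod K v) : Π₀ t' : BTree, ⨂[K] (_ : Fin t'.leaves), V) s := by
  rw [← PiTensorProduct.lift.tprod (R := K) v, ← Phi_single mod, piT_Phi]

lemma rDelta2_apply (x : M) :
    rDelta2 K S x = S.Delta x - x ⊗ₜ[K] S.one - S.one ⊗ₜ[K] x := by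
  simp [rDelta2, TensorProduct.mk_apply, LinearMap.flip_apply]

lemma rD_one (mod : Mag2Model K V M S) :
    rDelta2 K S S.one = - (S.one ⊗ₜ[K] S.one) := by
  rw [rDelta2_apply, mod.delta_one]; abel

lemma rD_leaf (mod : Mag2Model K V M S) (v : Fin BTree.leaf.leaves → V) :
    rDelta2 K S (mod.ι .leaf v) = 0 := by
  rw [rDelta2_apply, mod.delta_leaf]; abel

lemma rD_node (mod : Mag2Model K V M S) (l r : BTree)
    (v : Fin (BTree.node l r).leaves → V) :
    rDelta2 K S (mod.ι (.node l r) v) =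
      (mod.ι l (fun i => v (Fin.castAdd r.leaves i))) ⊗ₜ[K]
        (mod.ι r (fun i => v (Fin.natAdd l.leaves i))) := by
  rw [rDelta2_apply, mod.delta_node]; abel

lemma keyA (mod : Mag2Model K V M S) :
    (TensorProduct.lid K K).toLinearMap ∘ₗ
        TensorProduct.map (pi0 mod) (pi0 mod) ∘ₗ rDelta2 K S = - pi0 mod := by
  rw [← LinearMap.cancel_right (Phi_surj mod)]
  refine LinearMap.prod_ext (LinearMap.ext_ring ?_) (DFinsupp.lhom_ext' fun t => ?_)
  · simp only [LinearMap.coe_comp, Function.comp_apply, LinearMap.inl_apply,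
      LinearMap.neg_apply]
    rw [Phi_one mod, rD_one mod]
    simp [pi0_one mod]
  · refine PiTensorProduct.ext (MultilinearMap.ext fun v => ?_)
    simp only [LinearMap.compMultilinearMap_apply, LinearMap.coe_comp,
      Function.comp_apply, LinearMap.inr_apply, DFinsupp.lsingle_apply,
      LinearMap.neg_apply]
    rw [Phi_single mod, PiTensorProduct.lift.tprod]
    cases t with
    | leaf => rw [rD_leaf mod]; simp [pi0_iota mod]
    | node l r => rw [rD_node mod]; simp [pi0_iota mod]

lemma keyB (mod : Mag2Model K V M S) (l r : BTree) :
    (splitT K V l r).toLinearMap ∘ₗ piT mod (BTree.node l r) =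
      TensorProduct.map (piT mod l) (piT mod r) ∘ₗ rDelta2 K S := by
  rw [← LinearMap.cancel_right (Phi_surj mod)]
  refine LinearMap.prod_ext (LinearMap.ext_ring ?_) (DFinsupp.lhom_ext' fun t => ?_)
  · simp only [LinearMap.coe_comp, Function.comp_apply, LinearMap.inl_apply]
    rw [Phi_one mod, rD_one mod, piT_one mod]
    simp [piT_one mod]
  · refine PiTensorProduct.ext (MultilinearMap.ext fun v => ?_)
    simp only [LinearMap.compMultilinearMap_apply, LinearMap.coe_comp,
      Function.comp_apply, LinearMap.inr_apply, DFinsupp.lsingle_apply,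
      LinearEquiv.coe_coe]
    rw [Phi_single mod, PiTensorProduct.lift.tprod]
    cases t with
    | leaf =>
      rw [rD_leaf mod, piT_iota mod, map_zero,
        DFinsupp.single_eq_of_ne (fun h => BTree.noConfusion h), map_zero]
    | node a b =>
      rw [rD_node mod, piT_iota mod, TensorProduct.map_tmul,
        piT_iota mod, piT_iota mod]
      by_cases h : BTree.node a b = BTree.node l r
      · rw [BTree.node.injEq] at h
        obtain ⟨rfl, rfl⟩ := h
        rw [DFinsupp.single_eq_same, DFinsupp.single_eq_same,
          DFinsupp.single_eq_same, splitT_tprod]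
      · rw [DFinsupp.single_eq_of_ne (Ne.symm h), map_zero]
        rw [BTree.node.injEq, not_and_or] at h
        rcases h with h | h
        · rw [DFinsupp.single_eq_of_ne (Ne.symm h), TensorProduct.zero_tmul]
        · rw [DFinsupp.single_eq_of_ne (Ne.symm h), TensorProduct.tmul_zero]

lemma range_map_mono {A B : Submodule K M} (h : A ≤ B) :
    LinearMap.range (TensorProduct.map A.subtype A.subtype) ≤
      LinearMap.range (TensorProduct.map B.subtype B.subtype) := by
  have : A.subtype = B.subtype ∘ₗ Submodule.inclusion h := by
    ext x; rfl
  rw [this, TensorProduct.map_comp]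
  exact LinearMap.range_comp_le_range _ _

lemma fil_one (mod : Mag2Model K V M S) : ∀ rr : ℕ, S.one ∈ Fil2 K S rr
  | 0 => Submodule.mem_span_singleton_self _
  | (rr + 1) => by
    simp only [Fil2, Submodule.mem_comap]
    rw [rD_one mod]
    exact ⟨-((⟨S.one, fil_one mod rr⟩ : Fil2 K S rr) ⊗ₜ[K]
      (⟨S.one, fil_one mod rr⟩ : Fil2 K S rr)), by simp⟩

lemma fil_step (mod : Mag2Model K V M S) : ∀ rr : ℕ, Fil2 K S rr ≤ Fil2 K S (rr + 1)
  | 0 => by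
    simp only [Fil2]
    exact Submodule.span_le.mpr (Set.singleton_subset_iff.mpr (fil_one mod 1))
  | (rr + 1) => fun x hx => by
    simp only [Fil2, Submodule.mem_comap] at hx ⊢
    exact range_map_mono (fil_step mod rr) hx

lemma fil_mono (mod : Mag2Model K V M S) : Monotone (Fil2 K S) :=
  monotone_nat_of_le_succ (fil_step mod)

lemma iota_fil (mod : Mag2Model K V M S) :
    ∀ (n : ℕ) (t : BTree), t.leaves ≤ n → ∀ v, mod.ι t v ∈ Fil2 K S n := by
  intro n
  induction n with
  | zero => exact fun t h v => absurd h (by have := BTree.leaves_pos t; omega)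
  | succ n ih =>
    intro t h v
    cases t with
    | leaf =>
      simp only [Fil2, Submodule.mem_comap]
      rw [rD_leaf mod]
      exact zero_mem _
    | node l r =>
      have h' : l.leaves + r.leaves ≤ n + 1 := h
      have hl : l.leaves ≤ n := by have := BTree.leaves_pos r; omega
      have hr : r.leaves ≤ n := by have := BTree.leaves_pos l; omega
      simp only [Fil2, Submodule.mem_comap]
      rw [rD_node mod]
      exact ⟨(⟨mod.ι l (fun i => v (Fin.castAdd r.leaves i)), ih l hl _⟩ : Fil2 K S n)
        ⊗ₜ[K] (⟨mod.ι r (fun i => v (Fin.natAdd l.leaves i)), ih r hr _⟩ : Fil2 K S n),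
        by simp⟩

lemma lift_fil (mod : Mag2Model K V M S) (t : BTree) (y) :
    PiTensorProduct.lift (mod.ι t) y ∈ Fil2 K S t.leaves := by
  refine PiTensorProduct.induction_on y ?_ ?_
  · intro c v
    rw [map_smul, PiTensorProduct.lift.tprod]
    exact Submodule.smul_mem _ _ (iota_fil mod _ t le_rfl _)
  · intro a b ha hb
    rw [map_add]
    exact add_mem ha hb

lemma connected_aux (mod : Mag2Model K V M S) : Connected2 K S := by
  intro x
  obtain ⟨⟨c, f⟩, rfl⟩ := Phi_surj mod x
  have key : ∃ rr, (DFinsupp.lsum ℕ fun t : BTree => PiTensorProduct.lift (mod.ι t)) f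
      ∈ Fil2 K S rr := by
    induction f using DFinsupp.induction with
    | h0 => exact ⟨0, by rw [map_zero]; exact zero_mem _⟩
    | ha t y g hgt hy ih =>
      obtain ⟨rr, hrr⟩ := ih
      refine ⟨max t.leaves rr, ?_⟩
      rw [map_add, DFinsupp.lsum_single]
      exact add_mem (fil_mono mod (le_max_left _ _) (lift_fil mod t y))
        (fil_mono mod (le_max_right _ _) hrr)
  obtain ⟨rr, hrr⟩ := key
  refine ⟨rr, ?_⟩
  have : Phi mod (c, f) = c • S.one +
      (DFinsupp.lsum ℕ fun t : BTree => PiTensorProduct.lift (mod.ι t)) f := by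
    simp [Phi]
  rw [this]
  exact add_mem (Submodule.smul_mem _ _ (fil_one mod rr)) hrr

lemma prim_aux (mod : Mag2Model K V M S) :
    Prim2 K S = LinearMap.range (leafLin2 K mod) := by
  apply le_antisymm
  · intro x hx
    have hD : rDelta2 K S x = 0 := LinearMap.mem_ker.mp hx
    have hc : pi0 mod x = 0 := by
      have h := DFunLike.congr_fun (keyA mod) x
      simp only [LinearMap.coe_comp, Function.comp_apply, LinearMap.neg_apply] at h
      rw [hD, map_zero, map_zero] at h
      exact (neg_eq_zero.mp h.symm)
    have hnode : ∀ l r : BTree, piT mod (BTree.node l r) x = 0 := by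
      intro l r
      have h := DFunLike.congr_fun (keyB mod l r) x
      simp only [LinearMap.coe_comp, Function.comp_apply, LinearEquiv.coe_coe] at h
      rw [hD, map_zero] at h
      exact (LinearEquiv.map_eq_zero_iff _).mp h
    have hx2 : Phi mod ((eE mod).symm x) = x := Phi_symm mod x
    set p := (eE mod).symm x with hp
    have hc' : p.1 = 0 := by rw [← pi0_Phi mod p, hx2]; exact hc
    have hf : ∀ l r : BTree, p.2 (BTree.node l r) = 0 := fun l r => by
      rw [← piT_Phi mod _ p, hx2]; exact hnode l r
    have hfs : p.2 = DFinsupp.single BTree.leaf (p.2 BTree.leaf) := by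
      ext t
      cases t with
      | leaf => rw [DFinsupp.single_eq_same]
      | node l r =>
        rw [hf l r, DFinsupp.single_eq_of_ne (fun h => BTree.noConfusion h)]
    have hxv : x = PiTensorProduct.lift (mod.ι .leaf) (p.2 BTree.leaf) := by
      rw [← Phi_single mod, ← hx2]
      congr 1
      exact Prod.ext hc' hfs
    rw [hxv]
    refine ⟨PiTensorProduct.subsingletonEquiv (0 : Fin 1) (p.2 BTree.leaf), ?_⟩
    simp [leafLin2]
  · rintro x ⟨v, rfl⟩
    have hz : ∀ z, rDelta2 K S (PiTensorProduct.lift (mod.ι .leaf) z) = 0 := by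
      intro z
      refine PiTensorProduct.induction_on z ?_ ?_
      · intro c w
        rw [map_smul, PiTensorProduct.lift.tprod, map_smul, rD_leaf mod, smul_zero]
      · intro a b ha hb
        rw [map_add, map_add, ha, hb, add_zero]
    simp only [Prim2, LinearMap.mem_ker]
    have hrw : leafLin2 K mod v = PiTensorProduct.lift (mod.ι .leaf)
        ((PiTensorProduct.subsingletonEquiv (0 : Fin 1)).symm v) := rfl
    rw [hrw]
    exact hz _

end Mag2Aux

/-- `Mag^2(V)`, the space of labelled planar binary trees with
the grafting product and the ungrafting coproduct, is a connected binary magmatic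
bialgebra: `Δ(s·t) = s·t ⊗ 1 + s ⊗ t + 1 ⊗ s·t` for all labelled binary trees
`s, t`, the coalgebra is connected, and `Prim Mag^2(V) = V`. -/
theorem mag2Model_bialgebra (V M : Type*) [AddCommGroup V] [Module K V]
    [AddCommGroup M] [Module K M] (S : BinOps K M) (mod : Mag2Model K V M S) :
    (∀ (s t : BTree) (u : Fin s.leaves → V) (w : Fin t.leaves → V),
      S.Delta (S.mul (mod.ι s u) (mod.ι t w)) =
        (S.mul (mod.ι s u) (mod.ι t w)) ⊗ₜ[K] S.one +
        (mod.ι s u) ⊗ₜ[K] (mod.ι t w) +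
        S.one ⊗ₜ[K] (S.mul (mod.ι s u) (mod.ι t w))) ∧
    Connected2 K S ∧
    Prim2 K S = LinearMap.range (leafLin2 K mod) := by
  refine ⟨?_, connected_aux mod, prim_aux mod⟩
  intro s t u w
  have h0 := mod.ι_node s t (Fin.append u w)
  have hu : (fun i => Fin.append u w (Fin.castAdd t.leaves i)) = u :=
    funext fun i => Fin.append_left u w i
  have hw : (fun i => Fin.append u w (Fin.natAdd s.leaves i)) = w :=
    funext fun i => Fin.append_right u w i
  rw [hu, hw] at h0
  rw [h0, mod.delta_node s t (Fin.append u w), hu, hw]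
  abel

end
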